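/- Let p > 2, r > 0, c ∈ ℝ, and set δ = r·(1 − 2/p), P = {r² + z² : z ∈ ℂ, |Im z| ≤ δ}, S′ = {w ∈ ℂ : Re w > 0 and 0 < Im w < δ}, and Ω′ = interior(P − c) ∩ {z ∈ ℂ : Im z > 0}, where P − c = {w − c : w ∈ P}. Then the map g(w) = w² + r² − c is an injective holomorphic map from S′ onto Ω′; in particular Ω′ is an open connected subset of ℂ, and if c > c_p := (4r²/p)·(1 − 1/p) then Ω′ ∩ iℝ ≠ ∅. -/

import Mathlib

/-!
Writing `z = x + iy`, the point `w = z²` satisfies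
`(Im w)² - 4δ²(Re w + δ²) = 4(x² + δ²)(y² - δ²)`.
Hence squaring maps the strip `|Im z| ≤ δ` onto the parabolic region
`(Im w)² ≤ 4δ²(Re w + δ²)`, and the quarter `Re z > 0, 0 < Im z < δ` of the open strip
bijectively onto the upper half of its interior (squaring is injective on `Re z > 0`, and
`Im z² = 2 Re z Im z`). The map `g` is this squaring followed by the real translation by
`r² - c`, so everything transfers to `Ω'`. The translated region has vertex `r² - δ² - c`,
and `r² - δ² = c_p`, so for `c > c_p` it contains points of the positive imaginary axis.
-/

open Complex Filter Topology

namespace Complex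

def parabolicRegion (δ : ℝ) : Set ℂ := {w | w.im ^ 2 ≤ 4 * δ ^ 2 * (w.re + δ ^ 2)}

def openParabolicRegion (δ : ℝ) : Set ℂ := {w | w.im ^ 2 < 4 * δ ^ 2 * (w.re + δ ^ 2)}

variable {δ : ℝ}

theorem isOpen_openParabolicRegion (δ : ℝ) : IsOpen (openParabolicRegion δ) :=
  isOpen_lt (by fun_prop) (by fun_prop)

theorem im_sq_sq_sub_parabola_eq (z : ℂ) (δ : ℝ) :
    (z ^ 2).im ^ 2 - 4 * δ ^ 2 * ((z ^ 2).re + δ ^ 2) =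
      4 * (z.re ^ 2 + δ ^ 2) * (z.im ^ 2 - δ ^ 2) := by
  simp only [sq, mul_re, mul_im]
  ring

theorem sq_mem_parabolicRegion_iff (hδ : 0 < δ) (z : ℂ) :
    z ^ 2 ∈ parabolicRegion δ ↔ |z.im| ≤ δ := by
  have hpos : 0 < 4 * (z.re ^ 2 + δ ^ 2) := by positivity
  rw [parabolicRegion, Set.mem_ofPred_eq, ← sub_nonpos, im_sq_sq_sub_parabola_eq,
    ← sq_le_sq₀ (abs_nonneg _) hδ.le, sq_abs]
  constructor <;> intro h <;> nlinarith

theorem sq_mem_openParabolicRegion_iff (hδ : 0 < δ) (z : ℂ) :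
    z ^ 2 ∈ openParabolicRegion δ ↔ |z.im| < δ := by
  have hpos : 0 < 4 * (z.re ^ 2 + δ ^ 2) := by positivity
  rw [openParabolicRegion, Set.mem_ofPred_eq, ← sub_neg, im_sq_sq_sub_parabola_eq,
    ← sq_lt_sq₀ (abs_nonneg _) hδ.le, sq_abs]
  constructor <;> intro h <;> nlinarith

theorem exists_sq_eq_of_re_nonneg (w : ℂ) : ∃ z : ℂ, 0 ≤ z.re ∧ z ^ 2 = w := by
  obtain ⟨z, rfl⟩ := IsAlgClosed.exists_pow_nat_eq w two_pos
  rcases le_total 0 z.re with h | h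
  · exact ⟨z, h, rfl⟩
  · exact ⟨-z, by simpa using h, neg_sq z⟩

theorem sq_image_closedStrip (hδ : 0 < δ) :
    (· ^ 2) '' {z : ℂ | |z.im| ≤ δ} = parabolicRegion δ := by
  ext w
  constructor
  · rintro ⟨z, hz, rfl⟩
    exact (sq_mem_parabolicRegion_iff hδ z).2 hz
  · intro hw
    obtain ⟨z, -, rfl⟩ := exists_sq_eq_of_re_nonneg w
    exact ⟨z, (sq_mem_parabolicRegion_iff hδ z).1 hw, rfl⟩

theorem sq_image_halfStrip (hδ : 0 < δ) :
    (· ^ 2) '' {z : ℂ | 0 < z.re ∧ 0 < z.im ∧ z.im < δ} =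
      openParabolicRegion δ ∩ {w | 0 < w.im} := by
  ext w
  constructor
  · rintro ⟨z, ⟨hre, him, himδ⟩, rfl⟩
    refine ⟨(sq_mem_openParabolicRegion_iff hδ z).2 (by rwa [abs_of_pos him]), ?_⟩
    simp only [Set.mem_ofPred_eq, sq, mul_im]
    positivity
  · rintro ⟨hw, hw_im⟩
    obtain ⟨z, hre, rfl⟩ := exists_sq_eq_of_re_nonneg w
    have hre_mul_im : 0 < z.re * z.im := by
      simp only [Set.mem_ofPred_eq, sq, mul_im] at hw_im
      linarith
    have hre : 0 < z.re := lt_of_le_of_ne hre (by rintro h; simp [← h] at hre_mul_im)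
    have him : 0 < z.im := by nlinarith
    exact ⟨z, ⟨hre, him, (abs_lt.1 ((sq_mem_openParabolicRegion_iff hδ z).1 hw)).2⟩, rfl⟩

theorem interior_parabolicRegion (hδ : δ ≠ 0) :
    interior (parabolicRegion δ) = openParabolicRegion δ := by
  refine subset_antisymm (fun w hw => ?_)
    (interior_maximal (fun w hw => le_of_lt hw.out) (isOpen_openParabolicRegion δ))
  -- moving `w` to the left strictly increases `4δ²(Re w + δ²)`, so `w` is not on the boundary
  have hleft : Tendsto (fun t : ℝ => w - t) (𝓝[>] 0) (𝓝 w) :=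
    tendsto_nhdsWithin_of_tendsto_nhds <|
      (show Continuous fun t : ℝ => w - t by fun_prop).tendsto' 0 w (by simp)
  obtain ⟨t, ht, ht_pos⟩ :=
    ((hleft.eventually (mem_interior_iff_mem_nhds.1 hw)).and self_mem_nhdsWithin).exists
  replace ht : (w - t).im ^ 2 ≤ 4 * δ ^ 2 * ((w - t).re + δ ^ 2) := ht
  simp only [sub_re, sub_im, ofReal_re, ofReal_im, sub_zero] at ht
  have : 0 < δ ^ 2 * t := mul_pos (by positivity) ht_pos
  exact (show w.im ^ 2 < _ by nlinarith)

theorem injOn_sq_re_pos : Set.InjOn (· ^ 2 : ℂ → ℂ) {z | 0 < z.re} := by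
  intro z hz z' hz' h
  refine (sq_eq_sq_iff_eq_or_eq_neg.1 h).resolve_right fun hneg => ?_
  have := congrArg re hneg
  simp only [neg_re] at this
  linarith [hz.out, hz'.out]

theorem exists_I_mul_sub_mem_openParabolicRegion (hδ : δ ≠ 0) {a : ℝ} (ha : a < δ ^ 2) :
    ∃ y : ℝ, I * y - a ∈ openParabolicRegion δ ∩ {w | 0 < w.im} := by
  have hgap : 0 < δ ^ 2 - a := sub_pos.2 ha
  have hsqrt_pos := Real.sqrt_pos.2 hgap
  have hδ_sq : 0 < δ ^ 2 := by positivity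
  have hy_sq : (|δ| * √(δ ^ 2 - a)) ^ 2 = δ ^ 2 * (δ ^ 2 - a) := by
    rw [mul_pow, sq_abs, Real.sq_sqrt hgap.le]
  refine ⟨|δ| * √(δ ^ 2 - a), ?_⟩
  simp only [openParabolicRegion, Set.mem_inter_iff, Set.mem_ofPred_eq, sub_re, sub_im, mul_re,
    mul_im, I_re, I_im, ofReal_re, ofReal_im, zero_mul, one_mul, mul_zero, sub_zero, zero_sub]
  constructor <;> nlinarith [mul_pos (abs_pos.2 hδ) hsqrt_pos]

end Complex

/-- The change of variables for the higher-rank case: with `δ = r(1 - 2/p)`, the map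
`g(w) = w² + r² - c` is an injective holomorphic map from the half-strip
`S' = {Re w > 0, 0 < Im w < δ}` onto `Ω' = interior (P - c) ∩ {Im z > 0}`; in
particular `Ω'` is open and connected, and if `c > c_p = (4r²/p)(1 - 1/p)` then `Ω'`
meets the imaginary axis. -/
theorem higher_rank_change_of_variables
    (p r c : ℝ) (hp : 2 < p) (hr : 0 < r)
    (δ : ℝ) (hδ : δ = r * (1 - 2 / p))
    (P : Set ℂ) (hP : P = {w : ℂ | ∃ z : ℂ, |z.im| ≤ δ ∧ w = (r : ℂ) ^ 2 + z ^ 2})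
    (S' : Set ℂ) (hS' : S' = {w : ℂ | 0 < w.re ∧ 0 < w.im ∧ w.im < δ})
    (Ω' : Set ℂ)
    (hΩ' : Ω' = interior ((fun w => w - (c : ℂ)) '' P) ∩ {z : ℂ | 0 < z.im})
    (g : ℂ → ℂ) (hg : g = fun w => w ^ 2 + (r : ℂ) ^ 2 - (c : ℂ)) :
    Set.InjOn g S' ∧ DifferentiableOn ℂ g S' ∧ g '' S' = Ω' ∧
      IsOpen Ω' ∧ IsConnected Ω' ∧
      (4 * r ^ 2 / p * (1 - 1 / p) < c →
        ∃ y : ℝ, Complex.I * (y : ℂ) ∈ Ω') := by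
  have hδ_pos : 0 < δ := hδ ▸ mul_pos hr (sub_pos.2 ((div_lt_one (by linarith)).2 hp))
  set q : ℂ := ((r ^ 2 - c : ℝ) : ℂ)
  have hg_comp : g = (· + q) ∘ (· ^ 2) := by
    rw [hg]; ext w; simp [q]; ring
  have hP_image : (fun w => w - (c : ℂ)) '' P = (· + q) '' parabolicRegion δ := by
    have hP_eq : P = (fun z => (r : ℂ) ^ 2 + z ^ 2) '' {z | |z.im| ≤ δ} := by
      rw [hP]; ext w; exact exists_congr fun z => and_congr_right' eq_comm
    rw [hP_eq, ← sq_image_closedStrip hδ_pos, Set.image_image, Set.image_image]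
    congr; ext z; simp [q]; ring
  have hΩ : Ω' = (· + q) '' (openParabolicRegion δ ∩ {w | 0 < w.im}) := by
    rw [hΩ', hP_image, ← Homeomorph.coe_addRight, ← Homeomorph.image_interior,
      interior_parabolicRegion hδ_pos.ne', ← Set.image_inter_preimage]
    congr 2
    ext w
    simp only [Set.mem_preimage, Homeomorph.coe_addRight, Set.mem_ofPred_eq, add_im, q,
      ofReal_im, add_zero]
  have hS'_convex : Convex ℝ S' := hS' ▸ (convex_halfSpace_re_gt 0).inter
    ((convex_halfSpace_im_gt 0).inter (convex_halfSpace_im_lt δ))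
  have hS'_nonempty : S'.Nonempty :=
    ⟨⟨1, δ / 2⟩, hS' ▸ ⟨one_pos, half_pos hδ_pos, half_lt_self hδ_pos⟩⟩
  have hdiff : DifferentiableOn ℂ g S' := by rw [hg]; fun_prop
  have himage : g '' S' = Ω' := by
    rw [hg_comp, Set.image_comp, hS', sq_image_halfStrip hδ_pos, hΩ]
  refine ⟨hg_comp ▸ (add_left_injective q).comp_injOn
      (hS' ▸ injOn_sq_re_pos.mono fun z hz => hz.1), hdiff, himage,
    hΩ' ▸ isOpen_interior.inter (isOpen_lt continuous_const continuous_im),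
    himage ▸ (hS'_convex.isConnected hS'_nonempty).image g hdiff.continuousOn, fun hc => ?_⟩
  have hvertex : r ^ 2 - c < δ ^ 2 := by
    have : r ^ 2 - δ ^ 2 = 4 * r ^ 2 / p * (1 - 1 / p) := by rw [hδ]; field_simp; ring
    linarith
  obtain ⟨y, hy⟩ := exists_I_mul_sub_mem_openParabolicRegion hδ_pos.ne' hvertex
  exact ⟨y, hΩ ▸ ⟨_, hy, sub_add_cancel _ _⟩⟩
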